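/- In space dimension one, define μ(t,x;w) := min over s₁, s₂ ≥ 0 with s₁ + s₂ ≤ t of ( (x − s₁w)²/(2s₂²) + s₁ + s₂ ), with the convention (x−s₁w)²/(2·0²) = 0 if x = s₁w and +∞ otherwise. Then for w ≠ 0, μ(t,x;w) equals the minimum over the applicable cases of: x/w when 0 ≤ x/w ≤ t; (3/2)|x|^(2/3) when |x| ≤ t^(3/2); and x²/(2t²) + t when |x| ≥ t^(3/2). -/
import Mathlib

open scoped ENNReal Classical

lemma cube_pow (a : ℝ) : |a| ^ ((2:ℝ)/3) = (|a| ^ ((1:ℝ)/3))^2 := by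
  rw [← Real.rpow_natCast (|a| ^ ((1:ℝ)/3)) 2, ← Real.rpow_mul (abs_nonneg a)]
  norm_num

lemma six_pow (a : ℝ) : a ^ 2 = (|a| ^ ((1:ℝ)/3))^6 := by
  rw [← Real.rpow_natCast (|a| ^ ((1:ℝ)/3)) 6, ← Real.rpow_mul (abs_nonneg a)]
  norm_num [show ((1:ℝ)/3)*6 = ((2:ℕ):ℝ) by norm_num, Real.rpow_natCast, sq_abs]

lemma amgm_core (b s : ℝ) (hb : 0 ≤ b) (hs : 0 < s) :
    (3/2) * b^2 ≤ b^6/(2*s^2) + s := by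
  rw [div_add' _ _ _ (by positivity), le_div_iff₀ (by positivity)]
  nlinarith [sq_nonneg (b^2 - s), mul_nonneg (mul_nonneg hb hb) hs.le,
    sq_nonneg (b*(b^2-s)), mul_pos hs hs, mul_nonneg (sq_nonneg (b^2-s)) hs.le,
    mul_nonneg (sq_nonneg (b^2-s)) (mul_nonneg hb hb)]

lemma amgm (a s : ℝ) (hs : 0 < s) : (3/2) * |a| ^ ((2:ℝ)/3) ≤ a^2/(2*s^2) + s := by
  have h1 := cube_pow a
  have h2 := six_pow a
  rw [h1, h2]
  exact amgm_core _ s (Real.rpow_nonneg (abs_nonneg a) _) hs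

lemma mono_g (x σ t : ℝ) (hσ : 0 < σ) (hσt : σ ≤ t) (hx : t^3 ≤ x^2) :
    x^2/(2*t^2) + t ≤ x^2/(2*σ^2) + σ := by
  have ht : 0 < t := lt_of_lt_of_le hσ hσt
  rw [div_add' _ _ _ (by positivity), div_add' _ _ _ (by positivity),
    div_le_div_iff₀ (by positivity) (by positivity)]
  nlinarith [mul_nonneg (mul_nonneg (sub_nonneg.2 hσt) (sub_nonneg.2 hx))
      (by positivity : (0:ℝ) ≤ t + σ),
    mul_nonneg (mul_nonneg (sq_nonneg (t-σ)) (sq_nonneg t))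
      (by positivity : (0:ℝ) ≤ t + 2*σ)]

lemma rpow_to_cube (x t : ℝ) (ht : 0 < t) (h : t ^ ((3:ℝ)/2) ≤ |x|) : t^3 ≤ x^2 := by
  calc t ^ 3 = (t ^ ((3:ℝ)/2)) ^ (2:ℝ) := by
        rw [← Real.rpow_natCast t 3, ← Real.rpow_mul ht.le]; norm_num
    _ ≤ |x| ^ (2:ℝ) := Real.rpow_le_rpow (Real.rpow_nonneg ht.le _) h (by norm_num)
    _ = x^2 := by rw [show (2:ℝ) = ((2:ℕ):ℝ) by norm_num, Real.rpow_natCast, sq_abs]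

lemma abs_rpow_le (x t : ℝ) (ht : 0 < t) (h : |x| ≤ t ^ ((3:ℝ)/2)) :
    |x| ^ ((2:ℝ)/3) ≤ t := by
  calc |x| ^ ((2:ℝ)/3) ≤ (t ^ ((3:ℝ)/2)) ^ ((2:ℝ)/3) :=
        Real.rpow_le_rpow (abs_nonneg x) h (by norm_num)
    _ = t := by rw [← Real.rpow_mul ht.le]; norm_num

/-- `y²/(2 s²)` with the convention `0_{y = 0}` when `s = 0`. -/
noncomputable def fracE (y s : ℝ) : ℝ≥0∞ :=
  if s = 0 then (if y = 0 then 0 else ⊤) else ENNReal.ofReal (y ^ 2 / (2 * s ^ 2))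

/-- `μ(t,x;w) = min_{s₁,s₂ ≥ 0, s₁+s₂ ≤ t} ( (x-s₁w)²/(2s₂²) + s₁ + s₂ )`. -/
noncomputable def muE (t x w : ℝ) : ℝ≥0∞ :=
  sInf {m : ℝ≥0∞ | ∃ s₁ s₂ : ℝ, 0 ≤ s₁ ∧ 0 ≤ s₂ ∧ s₁ + s₂ ≤ t ∧
    m = fracE (x - s₁ * w) s₂ + ENNReal.ofReal (s₁ + s₂)}

theorem stmt_6 (t x w : ℝ) (ht : 0 < t) (hw : w ≠ 0) :
    muE t x w = sInf {c : ℝ≥0∞ |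
      (0 ≤ x / w ∧ x / w ≤ t ∧ c = ENNReal.ofReal (x / w)) ∨
      (|x| ≤ t ^ ((3:ℝ)/2) ∧ c = ENNReal.ofReal ((3 / 2) * |x| ^ ((2:ℝ)/3))) ∨
      (t ^ ((3:ℝ)/2) ≤ |x| ∧ c = ENNReal.ofReal (x ^ 2 / (2 * t ^ 2) + t))} := by
  apply le_antisymm
  · -- muE ≤ sInf RHS
    apply le_sInf
    rintro c (⟨h1, h2, rfl⟩ | ⟨h1, rfl⟩ | ⟨h1, rfl⟩)
    · -- candidate 1 : take s₁ = x/w, s₂ = 0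
      apply sInf_le
      refine ⟨x/w, 0, h1, le_refl 0, by linarith, ?_⟩
      rw [div_mul_cancel₀ x hw, sub_self]
      simp [fracE]
    · -- candidate 2 : take s₁ = 0, s₂ = |x|^(2/3)
      by_cases hx0 : x = 0
      · apply sInf_le
        refine ⟨0, 0, le_refl 0, le_refl 0, by linarith, ?_⟩
        simp [fracE, hx0, Real.zero_rpow (by norm_num : (2:ℝ)/3 ≠ 0)]
      · apply sInf_le
        have hs : 0 < |x| ^ ((2:ℝ)/3) := Real.rpow_pos_of_pos (abs_pos.2 hx0) _
        refine ⟨0, |x| ^ ((2:ℝ)/3), le_refl 0, hs.le, ?_, ?_⟩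
        · simpa using abs_rpow_le x t ht h1
        · have hs3 : (|x| ^ ((2:ℝ)/3))^3 = x^2 := by
            rw [← Real.rpow_natCast (|x| ^ ((2:ℝ)/3)) 3, ← Real.rpow_mul (abs_nonneg x)]
            norm_num [show ((2:ℝ)/3)*3 = ((2:ℕ):ℝ) by norm_num, Real.rpow_natCast, sq_abs]
          have hne : |x| ^ ((2:ℝ)/3) ≠ 0 := ne_of_gt hs
          rw [zero_mul, sub_zero]
          rw [show fracE x (|x| ^ ((2:ℝ)/3)) =
              ENNReal.ofReal (x^2/(2*(|x| ^ ((2:ℝ)/3))^2)) from if_neg hne]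
          rw [← ENNReal.ofReal_add (by positivity) (by positivity)]
          congr 1
          rw [zero_add, ← hs3]
          field_simp
          ring
    · -- candidate 3 : take s₁ = 0, s₂ = t
      apply sInf_le
      refine ⟨0, t, le_refl 0, ht.le, by linarith, ?_⟩
      rw [zero_mul, sub_zero,
        show fracE x t = ENNReal.ofReal (x^2/(2*t^2)) from if_neg (ne_of_gt ht),
        ← ENNReal.ofReal_add (by positivity) (by positivity), zero_add]
  · -- sInf RHS ≤ muE
    apply le_sInf
    rintro m ⟨s₁, s₂, hs₁, hs₂, hst, rfl⟩
    rcases eq_or_lt_of_le hs₂ with h0 | h0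
    · -- s₂ = 0
      by_cases hxy : x - s₁ * w = 0
      · have hr : x / w = s₁ := by
          have : x = s₁ * w := by linarith [sub_eq_zero.1 hxy]
          rw [this, mul_div_cancel_right₀ s₁ hw]
        refine le_trans (sInf_le (Or.inl ⟨by rw [hr]; exact hs₁, by rw [hr]; linarith, rfl⟩)) ?_
        rw [hr, ← h0]
        simp [fracE, hxy]
      · rw [← h0]
        simp [fracE, hxy]
    · -- s₂ > 0
      have hσ : 0 < s₁ + s₂ := by linarith
      rw [show fracE (x - s₁*w) s₂ = ENNReal.ofReal ((x - s₁*w)^2/(2*s₂^2)) from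
          if_neg (ne_of_gt h0),
        ← ENNReal.ofReal_add (by positivity) (by positivity)]
      by_cases hr : 0 ≤ x/w ∧ x/w ≤ s₁ + s₂
      · refine le_trans (sInf_le (Or.inl ⟨hr.1, le_trans hr.2 hst, rfl⟩)) ?_
        apply ENNReal.ofReal_le_ofReal
        have hA : 0 ≤ (x - s₁*w)^2/(2*s₂^2) := by positivity
        linarith [hr.2]
      · -- key inequality : x²/(2σ²) ≤ (x-s₁w)²/(2s₂²)
        have hx : x = (x/w) * w := by field_simp
        set r := x/w with hrdef
        have h2 : (r*s₂)^2 ≤ ((r - s₁)*(s₁+s₂))^2 := by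
          rcases not_and_or.1 hr with hneg | hbig
          · push_neg at hneg
            have hb : (0:ℝ) ≤ (s₁ - r)*(s₁+s₂) := by nlinarith
            have h3 : -((s₁ - r)*(s₁+s₂)) ≤ r*s₂ := by nlinarith
            have h4 : r*s₂ ≤ (s₁ - r)*(s₁+s₂) := by nlinarith
            calc (r*s₂)^2 ≤ ((s₁ - r)*(s₁+s₂))^2 := sq_le_sq' h3 h4
              _ = ((r - s₁)*(s₁+s₂))^2 := by ring
          · push_neg at hbig
            have h3 : 0 ≤ r*s₂ := by nlinarith
            have h4 : r*s₂ ≤ (r - s₁)*(s₁+s₂) := by nlinarith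
            exact pow_le_pow_left₀ h3 h4 2
        have key : x^2/(2*(s₁+s₂)^2) ≤ (x - s₁*w)^2/(2*s₂^2) := by
          rw [div_le_div_iff₀ (by positivity) (by positivity)]
          calc x^2 * (2*s₂^2) = 2*w^2*((r*s₂)^2) := by rw [hx]; ring
            _ ≤ 2*w^2*(((r - s₁)*(s₁+s₂))^2) := by
                apply mul_le_mul_of_nonneg_left h2 (by positivity)
            _ = (x - s₁*w)^2 * (2*(s₁+s₂)^2) := by rw [hx]; ring
        by_cases hxt : |x| ≤ t ^ ((3:ℝ)/2)
        · refine le_trans (sInf_le (Or.inr (Or.inl ⟨hxt, rfl⟩))) ?_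
          apply ENNReal.ofReal_le_ofReal
          linarith [amgm x (s₁+s₂) hσ]
        · refine le_trans (sInf_le (Or.inr (Or.inr ⟨(not_le.1 hxt).le, rfl⟩))) ?_
          apply ENNReal.ofReal_le_ofReal
          have := mono_g x (s₁+s₂) t hσ hst (rpow_to_cube x t ht (not_le.1 hxt).le)
          linarith
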